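/- arXiv:2001.07007 — 2 statements merged into one kernel-verified Lean document; each statement's English description precedes it below -/
import Mathlib

section
/- Let X be a real separated locally convex space, let g : X → ℝ ∪ {+∞} be a proper lower semicontinuous sublinear function, and let x* ∈ X*. Then L_{x*} := {x ∈ X : g(x) = ⟨x, x*⟩ and g(−x) = −⟨x, x*⟩} is a closed linear subspace of X, and L_{x*} = {x ∈ X : g(x) ≤ ⟨x, x*⟩ and g(−x) ≤ −⟨x, x*⟩} = [∂g(0) − x*]^⊥. Moreover, g(x + u) = g(x) + ⟨u, x*⟩ for all x ∈ X and all u ∈ L_{x*}. -/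
open Filter Topology Set Pointwise TopologicalSpace

noncomputable section

section Defs

variable {E : Type*} [AddCommGroup E] [Module ℝ E]

/-- Recession function of `f` based at `x₀ ∈ dom f`, as the supremum of the
(nondecreasing) difference quotients `(f (x₀ + t • u) - f x₀) / t`, `t > 0`. -/
def recAt (f : E → EReal) (x₀ u : E) : EReal :=
  ⨆ t ∈ Set.Ioi (0 : ℝ), ((t⁻¹ : ℝ) : EReal) * (f (x₀ + t • u) - f x₀)

/-- Sublinear function: positively homogeneous and subadditive. -/
def SublinearFn (g : E → EReal) : Prop :=
  g 0 = 0 ∧ (∀ x : E, ∀ t : ℝ, 0 < t → g (t • x) = (t : EReal) * g x) ∧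
    ∀ x y : E, g (x + y) ≤ g x + g y

variable [TopologicalSpace E]

/-- `Γ(E)`: proper lower semicontinuous convex functions. -/
def GammaFn (f : E → EReal) : Prop :=
  (∃ x, f x ≠ ⊤) ∧ (∀ x, f x ≠ ⊥) ∧
    Convex ℝ {p : E × ℝ | f p.1 ≤ (p.2 : EReal)} ∧ LowerSemicontinuous f

/-- Subdifferential at `0`, as a subset of the weak* dual. -/
def subdiff0 (g : E → EReal) : Set (WeakDual ℝ E) :=
  {xs | ∀ x, (xs x : EReal) ≤ g x}

/-- Fenchel conjugate. -/
def conjFn (f : E → EReal) (xs : WeakDual ℝ E) : EReal :=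
  ⨆ x, ((xs x : EReal) - f x)

/-- Domain of the conjugate. -/
def domConj (f : E → EReal) : Set (WeakDual ℝ E) := {xs | conjFn f xs ≠ ⊤}

/-- `xs ∈ ∂f(x)`. -/
def inSubdiff (f : E → EReal) (xs : WeakDual ℝ E) (x : E) : Prop :=
  f x ≠ ⊤ ∧ f x ≠ ⊥ ∧ ∀ x' : E, ((xs x' - xs x : ℝ) : EReal) + f x ≤ f x'

/-- Directionally coercive function. -/
def DirCoercive (f : E → EReal) : Prop :=
  ∀ x : E, ∀ u : E, u ≠ 0 → Filter.Tendsto (fun t : ℝ => f (x + t • u)) Filter.atTop (nhds ⊤)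

/-- The set `L_{x*} = {x | g(x) = ⟨x, x*⟩ and g(-x) = -⟨x, x*⟩}`. -/
def LxSet (g : E → EReal) (xs : WeakDual ℝ E) : Set E :=
  {x | g x = (xs x : EReal) ∧ g (-x) = ((-(xs x) : ℝ) : EReal)}

end Defs

section QRI

variable {F : Type*} [AddCommGroup F] [Module ℝ F] [TopologicalSpace F]

/-- The cone `ℝ₊ (A - a)`. -/
def coneGen (A : Set F) (a : F) : Set F :=
  {x | ∃ t : ℝ, 0 ≤ t ∧ ∃ b ∈ A, x = t • (b - a)}

/-- Quasi-relative interior. -/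
def qri (A : Set F) : Set F :=
  {a ∈ A | ∃ S : Submodule ℝ F, closure (coneGen A a) = (S : Set F)}

/-- Quasi-interior. -/
def qi (A : Set F) : Set F :=
  {a ∈ A | closure (coneGen A a) = Set.univ}

/-- Algebraic core of a set. -/
def coreSet (A : Set F) : Set F :=
  {a : F | ∀ u : F, ∃ δ : ℝ, 0 < δ ∧ ∀ t ∈ Set.Icc (0 : ℝ) δ, a + t • u ∈ A}

end QRI

/-!
Since `g 0 = 0`, subadditivity gives `-g (-x) ≤ g x`, so the inequalities defining the second
description of `L_{x*}` are equalities, and `g (x + u) = g x + ⟨u, x*⟩` for `u ∈ L_{x*}` follows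
from `g (x + u) ≤ g x + g u` and `g x ≤ g (x + u) + g (-u)`; this also makes `L_{x*}` a subspace.
The description as `[∂g(0) - x*]^⊥` rests on `g` being the supremum of `∂g(0)`: separating a
point strictly below the graph from the closed convex cone `epi g` by Hahn–Banach gives an
element of `∂g(0)` above it, except when the separating hyperplane is vertical, in which case a
large multiple of its functional is added to some element of `∂g(0)`.
-/

variable {X : Type*}

namespace SublinearFn

variable [AddCommGroup X] [Module ℝ X] {g : X → EReal}

theorem smul_le (hg : SublinearFn g) {r : ℝ} (hr : 0 ≤ r) {x : X} {a : ℝ}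
    (h : g x ≤ a) : g (r • x) ≤ ((r * a : ℝ) : EReal) := by
  rcases hr.eq_or_lt with rfl | hr
  · simp [hg.1]
  · rw [hg.2.1 x r hr, EReal.coe_mul]
    exact mul_le_mul_of_nonneg_left h (EReal.coe_nonneg.2 hr.le)

theorem convex_epigraph (hg : SublinearFn g) :
    Convex ℝ {p : X × ℝ | g p.1 ≤ p.2} := by
  rintro ⟨x, s⟩ hx ⟨y, t⟩ hy a b ha hb -
  calc g (a • x + b • y) ≤ g (a • x) + g (b • y) := hg.2.2 _ _
    _ ≤ ((a * s : ℝ) : EReal) + ((b * t : ℝ) : EReal) :=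
        add_le_add (hg.smul_le ha hx) (hg.smul_le hb hy)
    _ = ((a * s + b * t : ℝ) : EReal) := by rw [EReal.coe_add]

theorem add_coe_le (hg : SublinearFn g) {u : X} {a : ℝ} (hu : g (-u) ≤ ((-a : ℝ) : EReal))
    (x : X) : g x + a ≤ g (x + u) := by
  rw [← EReal.le_sub_iff_add_le (by simp) (by simp)]
  calc g x = g (x + u + -u) := by rw [add_neg_cancel_right]
    _ ≤ g (x + u) + g (-u) := hg.2.2 _ _
    _ ≤ g (x + u) + ((-a : ℝ) : EReal) := add_le_add_right hu _
    _ = g (x + u) - a := by rw [EReal.coe_neg, sub_eq_add_neg]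

theorem coe_le_of_neg_le (hg : SublinearFn g) {u : X} {a : ℝ}
    (hu : g (-u) ≤ ((-a : ℝ) : EReal)) : (a : EReal) ≤ g u := by
  simpa [hg.1] using hg.add_coe_le hu 0

end SublinearFn

section Dual

variable [AddCommGroup X] [Module ℝ X] [TopologicalSpace X] {g : X → EReal}

theorem neg_mem_lxSet {xs : WeakDual ℝ X} {u : X} (hu : u ∈ LxSet g xs) : -u ∈ LxSet g xs := by
  refine ⟨by rw [map_neg, hu.2], ?_⟩
  rw [neg_neg, map_neg, neg_neg, hu.1]

theorem apply_eq_of_mem_lxSet {xs : WeakDual ℝ X} {u : X} (hu : u ∈ LxSet g xs)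
    {ys : WeakDual ℝ X} (hys : ys ∈ subdiff0 g) : ys u = xs u := by
  have h₁ : ys u ≤ xs u := by exact_mod_cast hu.1 ▸ hys u
  have h₂ : -ys u ≤ -xs u := by exact_mod_cast map_neg ys u ▸ hu.2 ▸ hys (-u)
  linarith

theorem smul_mem_subdiff0 {φ : WeakDual ℝ X} {c : ℝ} (hc : 0 < c)
    (hφ : ∀ x (t : ℝ), g x ≤ t → φ x ≤ c * t) : c⁻¹ • φ ∈ subdiff0 g := by
  intro x
  rw [← EReal.le_of_forall_lt_iff_le]
  intro z hz
  exact_mod_cast (inv_mul_le_iff₀ hc).2 (hφ x z hz.le)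

theorem add_smul_mem_subdiff0 {ys φ : WeakDual ℝ X} (hys : ys ∈ subdiff0 g) {n : ℝ}
    (hn : 0 ≤ n) (hφ : ∀ x (t : ℝ), g x ≤ t → φ x ≤ 0) : ys + n • φ ∈ subdiff0 g := by
  intro x
  rw [← EReal.le_of_forall_lt_iff_le]
  intro z hz
  have hys' : ys x ≤ z := by exact_mod_cast (hys x).trans hz.le
  have : ys x + n * φ x ≤ z := by nlinarith [hφ x z hz.le]
  exact_mod_cast this

namespace SublinearFn

variable (xs : WeakDual ℝ X)

theorem lxSet_eq_setOf_le (hg : SublinearFn g) :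
    LxSet g xs = {x : X | g x ≤ (xs x : EReal) ∧ g (-x) ≤ ((-(xs x) : ℝ) : EReal)} := by
  ext x
  refine ⟨fun h => ⟨h.1.le, h.2.le⟩, fun ⟨h₁, h₂⟩ => ⟨h₁.antisymm (hg.coe_le_of_neg_le h₂),
    h₂.antisymm (hg.coe_le_of_neg_le ?_)⟩⟩
  rwa [neg_neg, neg_neg]

theorem add_of_mem_lxSet (hg : SublinearFn g) {u : X} (hu : u ∈ LxSet g xs) (x : X) :
    g (x + u) = g x + ((xs u : ℝ) : EReal) :=
  le_antisymm (hu.1 ▸ hg.2.2 x u) (hg.add_coe_le hu.2.le x)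

theorem smul_mem_lxSet_of_pos (hg : SublinearFn g) {t : ℝ} (ht : 0 < t) {u : X}
    (hu : u ∈ LxSet g xs) : t • u ∈ LxSet g xs := by
  constructor
  · rw [hg.2.1 u t ht, hu.1, map_smul, smul_eq_mul, EReal.coe_mul]
  · rw [← smul_neg, hg.2.1 (-u) t ht, hu.2, map_smul, smul_eq_mul, ← EReal.coe_mul, mul_neg]

def lxSubmodule (hg : SublinearFn g) : Submodule ℝ X where
  carrier := LxSet g xs
  zero_mem' := by simp [LxSet, hg.1]
  add_mem' {a b} ha hb := by
    refine ⟨by rw [hg.add_of_mem_lxSet xs hb, ha.1, map_add, EReal.coe_add], ?_⟩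
    rw [neg_add, hg.add_of_mem_lxSet xs (neg_mem_lxSet hb), ha.2, map_neg, map_add,
      ← EReal.coe_add, neg_add]
  smul_mem' t u hu := by
    rcases lt_trichotomy t 0 with ht | rfl | ht
    · rw [← neg_neg t, neg_smul, ← smul_neg]
      exact hg.smul_mem_lxSet_of_pos xs (neg_pos.2 ht) (neg_mem_lxSet hu)
    · simp [LxSet, hg.1]
    · exact hg.smul_mem_lxSet_of_pos xs ht hu

theorem isClosed_lxSet [ContinuousNeg X] (hg : SublinearFn g) (hlsc : LowerSemicontinuous g) :
    IsClosed (LxSet g xs) := by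
  have hxs : Continuous fun x => xs x := (xs : X →L[ℝ] ℝ).continuous
  rw [hg.lxSet_eq_setOf_le xs]
  exact (hlsc.isClosed_epigraph.preimage
      (continuous_id.prodMk (continuous_coe_real_ereal.comp hxs))).inter
    (hlsc.isClosed_epigraph.preimage
      (continuous_neg.prodMk (continuous_coe_real_ereal.comp hxs.neg)))

end SublinearFn

end Dual

section LocallyConvex

variable [AddCommGroup X] [Module ℝ X] [TopologicalSpace X] [IsTopologicalAddGroup X]
  [ContinuousSMul ℝ X] [LocallyConvexSpace ℝ X] {g : X → EReal}

namespace SublinearFn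

theorem exists_separation (hg : SublinearFn g) (hlsc : LowerSemicontinuous g) {x₀ : X} {r : ℝ}
    (hr : (r : EReal) < g x₀) : ∃ (φ : WeakDual ℝ X) (c : ℝ), 0 ≤ c ∧
      (∀ x (t : ℝ), g x ≤ t → φ x ≤ c * t) ∧ c * r < φ x₀ := by
  set epi := {p : X × ℝ | g p.1 ≤ p.2}
  have hclosed : IsClosed epi := hlsc.isClosed_epigraph.preimage
    (continuous_fst.prodMk (continuous_coe_real_ereal.comp continuous_snd))
  obtain ⟨f, u, hf, hu⟩ :=
    geometric_hahn_banach_closed_point hg.convex_epigraph hclosed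
      (x := (x₀, r)) (not_le.2 hr)
  have hu₀ : 0 < u := by simpa using hf 0 (by simp [hg.1])
  -- `epi` is a cone, so `f < u` on it forces `f ≤ 0` on it.
  have hnonpos : ∀ p ∈ epi, f p ≤ 0 := by
    intro p hp
    by_contra! hfp
    have := hf ((u / f p) • p) (hg.smul_le (div_pos hu₀ hfp).le hp)
    rw [map_smul, smul_eq_mul, div_mul_cancel₀ _ hfp.ne'] at this
    exact lt_irrefl _ this
  have hsplit : ∀ x t, f (x, t) = f (x, 0) + t * f (0, 1) := by
    intro x t
    rw [← smul_eq_mul, ← map_smul, ← map_add]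
    simp
  refine ⟨f.comp (ContinuousLinearMap.inl ℝ X ℝ), -f (0, 1), ?_, fun x t hx => ?_, ?_⟩
  · simpa using hnonpos (0, 1) (by simp [epi, hg.1])
  · have := hnonpos (x, t) hx
    rw [hsplit] at this
    change f (x, 0) ≤ -f (0, 1) * t
    linarith
  · change -f (0, 1) * r < f (x₀, 0)
    linarith [hsplit x₀ r]

theorem subdiff0_nonempty (hg : SublinearFn g) (hlsc : LowerSemicontinuous g) :
    (subdiff0 g).Nonempty := by
  obtain ⟨φ, c, -, hφ, hc⟩ := hg.exists_separation hlsc (x₀ := 0) (r := -1)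
    (by rw [hg.1]; exact_mod_cast neg_one_lt_zero)
  exact ⟨_, smul_mem_subdiff0 (by simpa using hc) hφ⟩

theorem exists_mem_subdiff0_gt (hg : SublinearFn g) (hlsc : LowerSemicontinuous g) {x₀ : X}
    {r : ℝ} (hr : (r : EReal) < g x₀) : ∃ ys ∈ subdiff0 g, r < ys x₀ := by
  obtain ⟨φ, c, hc, hφ, hφx₀⟩ := hg.exists_separation hlsc hr
  rcases hc.eq_or_lt with rfl | hc
  · -- vertical separating hyperplane: `φ ≤ 0` on `dom g` and `0 < φ x₀`
    obtain ⟨ys, hys⟩ := hg.subdiff0_nonempty hlsc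
    rw [zero_mul] at hφx₀
    obtain ⟨n, hn⟩ := exists_nat_gt ((r - ys x₀) / φ x₀)
    refine ⟨ys + (n : ℝ) • φ, add_smul_mem_subdiff0 hys n.cast_nonneg (by simpa using hφ), ?_⟩
    change r < ys x₀ + n * φ x₀
    rw [div_lt_iff₀ hφx₀] at hn
    linarith
  · refine ⟨_, smul_mem_subdiff0 hc hφ, ?_⟩
    change r < c⁻¹ * φ x₀
    rwa [lt_inv_mul_iff₀ hc]

theorem lxSet_eq_setOf_subdiff0 (hg : SublinearFn g) (hlsc : LowerSemicontinuous g)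
    (xs : WeakDual ℝ X) : LxSet g xs = {x | ∀ ys ∈ subdiff0 g, (ys - xs) x = 0} := by
  ext x
  refine ⟨fun hx ys hys => sub_eq_zero.2 (apply_eq_of_mem_lxSet hx hys), fun hx => ?_⟩
  have heq : ∀ ys ∈ subdiff0 g, ys x = xs x := fun ys hys => sub_eq_zero.1 (hx ys hys)
  rw [hg.lxSet_eq_setOf_le xs]
  constructor <;> refine not_lt.1 fun hlt => ?_
  · obtain ⟨ys, hys, hgt⟩ := hg.exists_mem_subdiff0_gt hlsc hlt
    exact (heq ys hys).not_gt hgt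
  · obtain ⟨ys, hys, hgt⟩ := hg.exists_mem_subdiff0_gt hlsc hlt
    rw [map_neg, heq ys hys] at hgt
    exact lt_irrefl _ hgt

end SublinearFn

end LocallyConvex

theorem stmt4_general [AddCommGroup X] [Module ℝ X] [TopologicalSpace X] [IsTopologicalAddGroup X]
    [ContinuousSMul ℝ X] [LocallyConvexSpace ℝ X]
    (g : X → EReal) (hsub : SublinearFn g)
    (hlsc : LowerSemicontinuous g) (xs : WeakDual ℝ X) :
    IsClosed (LxSet g xs) ∧
    (∃ S : Submodule ℝ X, LxSet g xs = (S : Set X)) ∧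
    LxSet g xs = {x : X | g x ≤ (xs x : EReal) ∧ g (-x) ≤ ((-(xs x) : ℝ) : EReal)} ∧
    LxSet g xs = {x : X | ∀ ys ∈ subdiff0 g, (ys - xs) x = 0} ∧
    ∀ x u : X, u ∈ LxSet g xs → g (x + u) = g x + ((xs u : ℝ) : EReal) :=
  ⟨hsub.isClosed_lxSet xs hlsc, ⟨hsub.lxSubmodule xs, rfl⟩, hsub.lxSet_eq_setOf_le xs,
    hsub.lxSet_eq_setOf_subdiff0 hlsc xs, fun x _ hu => hsub.add_of_mem_lxSet xs hu x⟩

theorem stmt4 [AddCommGroup X] [Module ℝ X] [TopologicalSpace X] [IsTopologicalAddGroup X]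
    [ContinuousSMul ℝ X] [LocallyConvexSpace ℝ X] [T2Space X]
    (g : X → EReal) (hsub : SublinearFn g) (hproper : ∀ x, g x ≠ ⊥)
    (hlsc : LowerSemicontinuous g) (xs : WeakDual ℝ X) :
    IsClosed (LxSet g xs) ∧
    (∃ S : Submodule ℝ X, LxSet g xs = (S : Set X)) ∧
    LxSet g xs = {x : X | g x ≤ (xs x : EReal) ∧ g (-x) ≤ ((-(xs x) : ℝ) : EReal)} ∧
    LxSet g xs = {x : X | ∀ ys ∈ subdiff0 g, (ys - xs) x = 0} ∧
    ∀ x u : X, u ∈ LxSet g xs → g (x + u) = g x + ((xs u : ℝ) : EReal) :=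
  stmt4_general g hsub hlsc xs
end
end

section
/- Let X be a real separated locally convex space, let g : X → ℝ ∪ {+∞} be a proper lower semicontinuous sublinear function, and let x* ∈ ∂g(0). Let L_g := L_{x*} (this set does not depend on the choice of x* ∈ ∂g(0)) and let X̂ := X/L_g be the quotient space with the quotient topology, with natural projection π : X → X̂. Then the function ĝ_{x*} : X̂ → ℝ ∪ {+∞} given by ĝ_{x*}(π(x)) := g(x) − ⟨x, x*⟩ is well defined, proper, lower semicontinuous, sublinear and nonnegative, and {x̂ ∈ X̂ : ĝ_{x*}(x̂) = ĝ_{x*}(−x̂) = 0} = {0̂}. Moreover, x* ∈ qri ∂g(0) if and only if 0 ∈ qi ∂ĝ_{x*}(0̂). -/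
open Filter Topology Set Pointwise TopologicalSpace

noncomputable section

/-!
Subtracting `x*` turns `g` into the nonnegative lower semicontinuous sublinear function
`h = g - x*`, whose lineality space `{h = 0 = h ∘ neg}` is `L`; subadditivity makes `h` invariant
under translation by `L`, so it descends to `X ⧸ L`. The transpose of the projection identifies
the weak* dual of `X ⧸ L` with the annihilator of `L`, a closed subspace of `X*`, and carries
`∂ĝ(0)` onto `∂g(0) - x*`. Hence `0 ∈ qi ∂ĝ(0)` iff the closed cone generated by `∂g(0) - x*`
is the whole annihilator. And if that closed cone is any subspace `V` at all, it is the whole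
annihilator: a direction on which `V` vanishes is one on which `∂g(0) - x*` vanishes, and since
`g` is the support function of `∂g(0)` (separate a point below the epigraph, a closed convex cone,
from it) such a direction lies in `L`.
-/

namespace SublinearFn

variable {E F : Type*} [AddCommGroup E] [Module ℝ E] [AddCommGroup F] [Module ℝ F]
  {g : E → EReal}

theorem of_comp {π : E →ₗ[ℝ] F} (hπ : Function.Surjective π) {f : F → EReal}
    (hf : SublinearFn (f ∘ π)) : SublinearFn f := by
  obtain ⟨hf0, hfsmul, hfadd⟩ := hf
  refine ⟨by simpa using hf0, fun y t ht => ?_, fun y y' => ?_⟩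
  · obtain ⟨x, rfl⟩ := hπ y
    simpa using hfsmul x t ht
  · obtain ⟨x, rfl⟩ := hπ y
    obtain ⟨x', rfl⟩ := hπ y'
    simpa using hfadd x x'

theorem sub_linearMap (hg : SublinearFn g) {Φ : Type*} [FunLike Φ E ℝ] [LinearMapClass Φ ℝ E ℝ]
    (φ : Φ) : SublinearFn fun x => g x - (φ x : EReal) := by
  obtain ⟨hg0, hgsmul, hgadd⟩ := hg
  refine ⟨by simp [hg0], fun x t ht => ?_, fun x y => ?_⟩
  · dsimp only
    rw [hgsmul x t ht, map_smul, smul_eq_mul, EReal.coe_mul,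
      EReal.mul_sub_of_nonneg_of_ne_top (EReal.coe_nonneg.2 ht.le) (EReal.coe_ne_top t)]
  · calc g (x + y) - (φ (x + y) : EReal) = g (x + y) + ((-φ x + -φ y : ℝ) : EReal) := by
          rw [map_add, sub_eq_add_neg, ← EReal.coe_neg, neg_add]
      _ ≤ g x + g y + ((-φ x + -φ y : ℝ) : EReal) := add_le_add_left (hgadd x y) _
      _ = g x - (φ x : EReal) + (g y - (φ y : EReal)) := by
          rw [EReal.coe_add, add_add_add_comm, sub_eq_add_neg, sub_eq_add_neg, EReal.coe_neg,
            EReal.coe_neg]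

theorem apply_add_eq_of_nonpos (hg : SublinearFn g) {l : E} (hl : g l ≤ 0) (hl' : g (-l) ≤ 0) (x : E) :
    g (x + l) = g x := by
  refine le_antisymm ?_ ?_
  · calc g (x + l) ≤ g x + g l := hg.2.2 x l
      _ ≤ g x := add_le_of_nonpos_right hl
  · calc g x = g (x + l + -l) := by rw [add_neg_cancel_right]
      _ ≤ g (x + l) + g (-l) := hg.2.2 _ _
      _ ≤ g (x + l) := add_le_of_nonpos_right hl'

end SublinearFn

section Subdifferential

variable {E : Type*} [AddCommGroup E] [Module ℝ E] [TopologicalSpace E] {g : E → EReal}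

theorem sub_nonneg_of_mem_subdiff0 {xs : WeakDual ℝ E} (hxs : xs ∈ subdiff0 g) (x : E) :
    0 ≤ g x - (xs x : EReal) :=
  (EReal.sub_nonneg (.inr (EReal.coe_ne_top _)) (.inr (EReal.coe_ne_bot _))).2 (hxs x)

theorem subdiff0_sub (xs : WeakDual ℝ E) :
    subdiff0 (fun x => g x - (xs x : EReal)) = (· + xs) ⁻¹' subdiff0 g := by
  ext y
  refine forall_congr' fun x => ?_
  rw [EReal.le_sub_iff_add_le (.inl (EReal.coe_ne_bot _)) (.inl (EReal.coe_ne_top _)),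
    ← EReal.coe_add]
  rfl

theorem apply_eq_zero_of_mem_subdiff0 {y : WeakDual ℝ E} (hy : y ∈ subdiff0 g) {l : E}
    (hl : g l ≤ 0) (hl' : g (-l) ≤ 0) : y l = 0 := by
  have h₁ : y l ≤ 0 := EReal.coe_nonpos.1 ((hy l).trans hl)
  have h₂ : y (-l) ≤ 0 := EReal.coe_nonpos.1 ((hy (-l)).trans hl')
  rw [map_neg] at h₂
  linarith

theorem mem_LxSet_iff {xs : WeakDual ℝ E} (hxs : xs ∈ subdiff0 g) {x : E} :
    x ∈ LxSet g xs ↔ g x - (xs x : EReal) ≤ 0 ∧ g (-x) - (xs (-x) : EReal) ≤ 0 := by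
  simp only [LxSet, Set.mem_ofPred_eq, EReal.sub_nonpos, map_neg]
  exact and_congr ⟨le_of_eq, fun h => h.antisymm (hxs x)⟩
    ⟨le_of_eq, fun h => h.antisymm (by simpa using hxs (-x))⟩

theorem mem_subdiff0_of_forall_le {xs y : WeakDual ℝ E}
    (hxs : xs ∈ subdiff0 g) (h : ∀ x (s : ℝ), g x ≤ s → y x ≤ s) : y ∈ subdiff0 g := by
  intro x
  by_cases hx : g x = ⊤
  · simp [hx]
  have hx' : g x = ((g x).toReal : EReal) :=
    (EReal.coe_toReal hx (ne_bot_of_le_ne_bot (EReal.coe_ne_bot _) (hxs x))).symm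
  rw [hx']
  exact EReal.coe_le_coe_iff.2 (h x _ hx'.le)

end Subdifferential

section Cone

variable {F G : Type*} [AddCommGroup F] [Module ℝ F] [AddCommGroup G] [Module ℝ G]

theorem coneGen_preimage_add_right (A : Set F) (a : F) :
    coneGen ((· + a) ⁻¹' A) 0 = coneGen A a := by
  ext x
  constructor
  · rintro ⟨t, ht, b, hb, rfl⟩
    exact ⟨t, ht, b + a, hb, by rw [sub_zero, add_sub_cancel_right]⟩
  · rintro ⟨t, ht, b, hb, rfl⟩
    exact ⟨t, ht, b - a, by simpa using hb, by rw [sub_zero]⟩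

theorem image_coneGen {Φ : Type*} [FunLike Φ F G] [LinearMapClass Φ ℝ F G] (f : Φ) (A : Set F)
    (a : F) : f '' coneGen A a = coneGen (f '' A) (f a) := by
  ext x
  constructor
  · rintro ⟨_, ⟨t, ht, b, hb, rfl⟩, rfl⟩
    exact ⟨t, ht, f b, ⟨b, hb, rfl⟩, by rw [map_smul, map_sub]⟩
  · rintro ⟨t, ht, _, ⟨b, hb, rfl⟩, rfl⟩
    exact ⟨t • (b - a), ⟨t, ht, b, hb, rfl⟩, by rw [map_smul, map_sub]⟩

end Cone

namespace SublinearFn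

variable {E : Type*} [AddCommGroup E] [Module ℝ E] [TopologicalSpace E] [IsTopologicalAddGroup E]
  [ContinuousSMul ℝ E] [LocallyConvexSpace ℝ E] {g : E → EReal}

theorem exists_separating_epigraph (hg : SublinearFn g) (hlsc : LowerSemicontinuous g) {x₀ : E}
    {r : ℝ} (hr : (r : EReal) < g x₀) :
    ∃ f : StrongDual ℝ (E × ℝ), (∀ x (s : ℝ), g x ≤ s → 0 ≤ f (x, s)) ∧ f (x₀, r) < 0 := by
  obtain ⟨hg0, hgsmul, hgadd⟩ := hg
  let epi : ProperCone ℝ (E × ℝ) :=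
    { carrier := {p | g p.1 ≤ p.2}
      add_mem' := fun {p q} hp hq => by
        simp only [Set.mem_ofPred_eq, Prod.fst_add, Prod.snd_add, EReal.coe_add] at *
        exact (hgadd _ _).trans (add_le_add hp hq)
      zero_mem' := by simp [hg0]
      smul_mem' := fun ⟨c, hc⟩ p (hp : g p.1 ≤ p.2) => by
        change g (c • p.1) ≤ ((c * p.2 : ℝ) : EReal)
        rw [EReal.coe_mul]
        rcases hc.eq_or_lt with rfl | hc
        · simp [hg0]
        · rw [hgsmul _ _ hc]
          exact mul_le_mul_of_nonneg_left hp (EReal.coe_nonneg.2 hc.le)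
      isClosed' := (lowerSemicontinuous_iff_isClosed_epigraph.1 hlsc).preimage
        (continuous_id.prodMap continuous_coe_real_ereal) }
  obtain ⟨f, hf, hfx₀⟩ := epi.hyperplane_separation_point (x₀ := (x₀, r)) hr.not_ge
  exact ⟨f, fun x s hs => hf (x, s) hs, hfx₀⟩

theorem le_of_forall_mem_subdiff0_le (hg : SublinearFn g) (hlsc : LowerSemicontinuous g)
    {xs : WeakDual ℝ E} (hxs : xs ∈ subdiff0 g) {x₀ : E} {r : ℝ}
    (h : ∀ y ∈ subdiff0 g, y x₀ ≤ r) : g x₀ ≤ r := by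
  by_contra! hr
  obtain ⟨f, hf, hfx₀⟩ := hg.exists_separating_epigraph hlsc hr
  let φ : StrongDual ℝ E := f.comp (.inl ℝ E ℝ)
  have hf_apply : ∀ x s, f (x, s) = φ x + s * f (0, 1) := fun x s => by
    rw [show (x, s) = (x, 0) + s • ((0 : E), (1 : ℝ)) by simp, map_add, map_smul, smul_eq_mul]
    rfl
  obtain ⟨y, hy, hyr⟩ : ∃ y ∈ subdiff0 g, r < y x₀ := by
    rcases (show 0 ≤ f (0, 1) by simpa [hg.1] using hf 0 1).eq_or_lt' with hc | hc
    · -- the separating hyperplane is vertical: tilt `xs` along `-φ`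
      have hφ : ∀ x (s : ℝ), g x ≤ s → 0 ≤ φ x := fun x s hs => by
        simpa only [hf_apply x s, hc, mul_zero, add_zero] using hf x s hs
      have hφx₀ : φ x₀ < 0 := by simpa only [hf_apply x₀ r, hc, mul_zero, add_zero] using hfx₀
      obtain ⟨n, hn⟩ := exists_nat_gt ((r - xs x₀) / -φ x₀)
      refine ⟨StrongDual.toWeakDual (WeakDual.toStrongDual xs - (n : ℝ) • φ),
        mem_subdiff0_of_forall_le hxs fun x s hs => ?_, ?_⟩
      · have : (xs x : ℝ) ≤ s := EReal.coe_le_coe_iff.1 ((hxs x).trans hs)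
        change xs x - n * φ x ≤ s
        nlinarith [hφ x s hs, (n.cast_nonneg : (0 : ℝ) ≤ n)]
      · change r < xs x₀ - n * φ x₀
        rw [div_lt_iff₀ (neg_pos.2 hφx₀)] at hn
        linarith
    · refine ⟨StrongDual.toWeakDual (-(f (0, 1))⁻¹ • φ),
        mem_subdiff0_of_forall_le hxs fun x s hs => ?_, ?_⟩
      · have := hf x s hs
        rw [hf_apply] at this
        change -(f (0, 1))⁻¹ * φ x ≤ s
        rw [neg_mul, neg_le, le_inv_mul_iff₀ hc]
        nlinarith
      · rw [hf_apply] at hfx₀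
        change r < -(f (0, 1))⁻¹ * φ x₀
        rw [neg_mul, lt_neg, inv_mul_lt_iff₀ hc]
        nlinarith
  exact (h y hy).not_gt hyr

end SublinearFn

theorem Pi.isInducing_precomp {ι ι' Y : Type*} [TopologicalSpace Y] {φ : ι' → ι}
    (hφ : Function.Surjective φ) : IsInducing (· ∘ φ : (ι → Y) → (ι' → Y)) :=
  ⟨by rw [Pi.induced_precomp, hφ.iInf_comp fun i => induced (Function.eval i) _]; rfl⟩

theorem LowerSemicontinuous.of_comp_isQuotientMap {X Y γ : Type*} [TopologicalSpace X]
    [TopologicalSpace Y] [LinearOrder γ] {π : X → Y} (hπ : IsQuotientMap π) {f : Y → γ}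
    (hf : LowerSemicontinuous (f ∘ π)) : LowerSemicontinuous f :=
  lowerSemicontinuous_iff_isOpen_preimage.2 fun c =>
    hπ.isOpen_preimage.1 (lowerSemicontinuous_iff_isOpen_preimage.1 hf c)

theorem LowerSemicontinuous.sub_coe {X : Type*} [TopologicalSpace X] {f : X → EReal}
    (hf : LowerSemicontinuous f) {φ : X → ℝ} (hφ : Continuous φ) :
    LowerSemicontinuous fun x => f x - (φ x : EReal) := by
  simp only [sub_eq_add_neg, ← EReal.coe_neg]
  exact hf.add' (continuous_coe_real_ereal.comp hφ.neg).lowerSemicontinuous fun x =>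
    EReal.continuousAt_add (.inr (EReal.coe_ne_bot _)) (.inr (EReal.coe_ne_top _))

theorem Submodule.exists_comp_mkQ_eq {E β : Type*} [AddCommGroup E] [Module ℝ E]
    (S : Submodule ℝ E) {f : E → β} (hf : ∀ x, ∀ l ∈ S, f (x + l) = f x) :
    ∃ f' : E ⧸ S → β, f' ∘ S.mkQ = f :=
  ⟨fun q => Quotient.liftOn' q f fun a b hab => by
    rw [← hf b (a - b) ((S.quotientRel_def).1 hab), add_sub_cancel], rfl⟩

section WeakDualMap

variable {E F : Type*} [AddCommGroup E] [Module ℝ E] [TopologicalSpace E]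
  [AddCommGroup F] [Module ℝ F] [TopologicalSpace F]

theorem WeakDual.exists_apply_ne_zero_of_notMem {V : Submodule ℝ (WeakDual ℝ E)}
    (hV : IsClosed (V : Set (WeakDual ℝ E))) {z : WeakDual ℝ E} (hz : z ∉ V) :
    ∃ x : E, (∀ y ∈ V, y x = 0) ∧ z x ≠ 0 := by
  have : LocallyConvexSpace ℝ (WeakDual ℝ E) := WeakBilin.locallyConvexSpace
  obtain ⟨f, hfV, hfz⟩ := ProperCone.hyperplane_separation_point
    (⟨V.restrictScalars NNReal, hV⟩ : ProperCone ℝ (WeakDual ℝ E)) hz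
  obtain ⟨x, rfl⟩ := LinearMap.dualEmbedding_surjective (topDualPairing ℝ E) f
  refine ⟨x, fun y hy => le_antisymm ?_ (hfV y hy), hfz.ne⟩
  have : 0 ≤ (-y) x := hfV (-y) (V.neg_mem hy)
  exact neg_nonneg.1 this

def ContinuousLinearMap.weakDualMap (T : E →L[ℝ] F) : WeakDual ℝ F →L[ℝ] WeakDual ℝ E where
  toFun w := StrongDual.toWeakDual ((WeakDual.toStrongDual w).comp T)
  map_add' _ _ := rfl
  map_smul' _ _ := rfl
  cont := WeakDual.continuous_of_continuous_eval fun x => WeakDual.eval_continuous (T x)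

namespace ContinuousLinearMap

variable {T : E →L[ℝ] F}

@[simp]
theorem weakDualMap_apply (w : WeakDual ℝ F) (x : E) : T.weakDualMap w x = w (T x) := rfl

theorem isInducing_weakDualMap (hT : Function.Surjective T) : IsInducing T.weakDualMap := by
  have hE : IsInducing fun (z : WeakDual ℝ E) (x : E) => z x := ⟨rfl⟩
  have hF : IsInducing fun (w : WeakDual ℝ F) (y : F) => w y := ⟨rfl⟩
  exact hE.of_comp_iff.1 ((Pi.isInducing_precomp hT).comp hF)

theorem weakDualMap_mem_subdiff0_iff (hT : Function.Surjective T) {f : F → EReal}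
    {w : WeakDual ℝ F} : T.weakDualMap w ∈ subdiff0 (f ∘ T) ↔ w ∈ subdiff0 f := by
  refine ⟨fun hw y => ?_, fun hw x => hw (T x)⟩
  obtain ⟨x, rfl⟩ := hT y
  exact hw x

theorem image_weakDualMap_subdiff0 (hT : Function.Surjective T) {f : F → EReal}
    (hrange : subdiff0 (f ∘ T) ⊆ Set.range T.weakDualMap) :
    T.weakDualMap '' subdiff0 f = subdiff0 (f ∘ T) := by
  refine subset_antisymm ?_ fun z hz => ?_
  · rintro _ ⟨w, hw, rfl⟩
    exact (weakDualMap_mem_subdiff0_iff hT).2 hw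
  · obtain ⟨w, rfl⟩ := hrange hz
    exact ⟨w, (weakDualMap_mem_subdiff0_iff hT).1 hz, rfl⟩

end ContinuousLinearMap

namespace Submodule

variable (S : Submodule ℝ E)

theorem mem_range_weakDualMap_mkQL {z : WeakDual ℝ E} :
    z ∈ Set.range S.mkQL.weakDualMap ↔ ∀ l ∈ S, z l = 0 := by
  refine ⟨?_, fun hz => ?_⟩
  · rintro ⟨w, rfl⟩ l hl
    simp [(Submodule.Quotient.mk_eq_zero S).2 hl]
  · exact ⟨StrongDual.toWeakDual (S.liftQL (WeakDual.toStrongDual z) hz), rfl⟩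

theorem isClosed_range_weakDualMap_mkQL : IsClosed (Set.range S.mkQL.weakDualMap) := by
  have : Set.range S.mkQL.weakDualMap = ⋂ l ∈ S, {z : WeakDual ℝ E | z l = 0} := by
    ext z
    rw [mem_range_weakDualMap_mkQL]
    simp
  rw [this]
  exact isClosed_biInter fun l _ => isClosed_eq (WeakDual.eval_continuous l) continuous_const

end Submodule

end WeakDualMap

theorem mem_qri_iff_zero_mem_qri {F : Type*} [AddCommGroup F] [Module ℝ F] [TopologicalSpace F]
    {A : Set F} {a : F} : a ∈ qri A ↔ (0 : F) ∈ qri ((· + a) ⁻¹' A) := by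
  change a ∈ A ∧ _ ↔ 0 + a ∈ A ∧ ∃ V : Submodule ℝ F, closure (coneGen ((· + a) ⁻¹' A) 0) = V
  rw [zero_add, coneGen_preimage_add_right]

theorem closure_eq_univ_iff_closure_image_eq_range {α β : Type*} [TopologicalSpace α]
    [TopologicalSpace β] {f : α → β} (hf : IsInducing f) (hrange : IsClosed (Set.range f))
    {s : Set α} : closure s = Set.univ ↔ closure (f '' s) = Set.range f := by
  refine ⟨fun hs => subset_antisymm (closure_minimal (Set.image_subset_range f s) hrange) ?_,
    fun hs => by rw [hf.closure_eq_preimage_closure_image, hs, Set.preimage_range]⟩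
  rw [← Set.image_univ, ← hs]
  exact image_closure_subset_closure_image hf.continuous

section Quotient

variable {X : Type*} [AddCommGroup X] [Module ℝ X] [TopologicalSpace X] [IsTopologicalAddGroup X]
  [ContinuousSMul ℝ X] [LocallyConvexSpace ℝ X] {h : X → EReal} {S : Submodule ℝ X}

theorem range_weakDualMap_mkQL_subset (hh : SublinearFn h) (hlsc : LowerSemicontinuous h)
    (h0 : 0 ∈ subdiff0 h) (hS : ∀ x, h x ≤ 0 → h (-x) ≤ 0 → x ∈ S)
    {V : Submodule ℝ (WeakDual ℝ X)} (hV : closure (coneGen (subdiff0 h) 0) = V) :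
    Set.range S.mkQL.weakDualMap ⊆ V := by
  rintro _ ⟨w, rfl⟩
  by_contra hw
  obtain ⟨x₀, hV₀, hx₀⟩ := WeakDual.exists_apply_ne_zero_of_notMem (hV ▸ isClosed_closure) hw
  have hsubV : ∀ y ∈ subdiff0 h, y ∈ V := fun y hy => by
    rw [← SetLike.mem_coe, ← hV]
    exact subset_closure ⟨1, zero_le_one, y, hy, by rw [sub_zero, one_smul]⟩
  have hsupport : ∀ x, (∀ y ∈ V, y x = 0) → h x ≤ 0 := fun x hx => by
    exact_mod_cast hh.le_of_forall_mem_subdiff0_le hlsc h0 (r := 0) fun y hy =>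
      (hx y (hsubV y hy)).le
  have hx₀S : x₀ ∈ S := hS x₀ (hsupport x₀ hV₀) (hsupport (-x₀) fun y hy => by
    rw [map_neg, hV₀ y hy, neg_zero])
  exact hx₀ (by simp [(Submodule.Quotient.mk_eq_zero S).2 hx₀S])

theorem zero_mem_qri_iff_zero_mem_qi (hh : SublinearFn h) (hlsc : LowerSemicontinuous h)
    (hnonneg : ∀ x, 0 ≤ h x) (hS : ∀ x, x ∈ S ↔ h x ≤ 0 ∧ h (-x) ≤ 0) {gh : X ⧸ S → EReal}
    (hgh : gh ∘ S.mkQ = h) :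
    (0 : WeakDual ℝ X) ∈ qri (subdiff0 h) ↔ (0 : WeakDual ℝ (X ⧸ S)) ∈ qi (subdiff0 gh) := by
  have h0 : (0 : WeakDual ℝ X) ∈ subdiff0 h := fun x => by
    change ((0 : ℝ) : EReal) ≤ h x
    exact_mod_cast hnonneg x
  have hgh0 : (0 : WeakDual ℝ (X ⧸ S)) ∈ subdiff0 gh := by
    rw [← S.mkQL.weakDualMap_mem_subdiff0_iff S.mkQ_surjective, map_zero]
    exact hgh ▸ h0
  have hrange : subdiff0 h ⊆ Set.range S.mkQL.weakDualMap := fun y hy =>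
    (S.mem_range_weakDualMap_mkQL).2 fun l hl =>
      apply_eq_zero_of_mem_subdiff0 hy ((hS l).1 hl).1 ((hS l).1 hl).2
  have hcone : S.mkQL.weakDualMap '' coneGen (subdiff0 gh) 0 = coneGen (subdiff0 h) 0 := by
    rw [image_coneGen, map_zero,
      S.mkQL.image_weakDualMap_subdiff0 S.mkQ_surjective (hgh ▸ hrange)]
    exact congrArg (coneGen · 0) (congrArg subdiff0 hgh)
  simp only [qri, qi, Set.mem_sep_iff, h0, hgh0, true_and,
    closure_eq_univ_iff_closure_image_eq_range (ContinuousLinearMap.isInducing_weakDualMap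
      S.mkQ_surjective) S.isClosed_range_weakDualMap_mkQL, hcone]
  refine ⟨fun ⟨V, hV⟩ => subset_antisymm ?_ (hV ▸ range_weakDualMap_mkQL_subset hh hlsc h0
    (fun x hx hx' => (hS x).2 ⟨hx, hx'⟩) hV), fun hT => ?_⟩
  · exact closure_minimal (hcone ▸ Set.image_subset_range _ _) S.isClosed_range_weakDualMap_mkQL
  · exact ⟨LinearMap.range S.mkQL.weakDualMap.toLinearMap, by rw [hT, LinearMap.coe_range]; rfl⟩

end Quotient

variable {X : Type*}

theorem stmt9_general [AddCommGroup X] [Module ℝ X] [TopologicalSpace X] [IsTopologicalAddGroup X]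
    [ContinuousSMul ℝ X] [LocallyConvexSpace ℝ X]
    (g : X → EReal) (hsub : SublinearFn g)
    (hlsc : LowerSemicontinuous g) (xs : WeakDual ℝ X) (hxs : xs ∈ subdiff0 g)
    (S : Submodule ℝ X) (hS : (S : Set X) = LxSet g xs) :
    ∃ gh : (X ⧸ S) → EReal,
      (∀ x : X, gh (Submodule.Quotient.mk x) = g x - ((xs x : ℝ) : EReal)) ∧
      (∀ xh, gh xh ≠ ⊥) ∧ (∃ xh, gh xh ≠ ⊤) ∧
      LowerSemicontinuous gh ∧ SublinearFn gh ∧ (∀ xh, 0 ≤ gh xh) ∧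
      {xh : X ⧸ S | gh xh = 0 ∧ gh (-xh) = 0} = {0} ∧
      (xs ∈ qri (subdiff0 g) ↔ (0 : WeakDual ℝ (X ⧸ S)) ∈ qi (subdiff0 gh)) := by
  have hh : SublinearFn fun x => g x - (xs x : EReal) := hsub.sub_linearMap xs
  have hlsc' : LowerSemicontinuous fun x => g x - (xs x : EReal) := hlsc.sub_coe xs.continuous
  have hnonneg : ∀ x, 0 ≤ g x - (xs x : EReal) := sub_nonneg_of_mem_subdiff0 hxs
  have hmemS : ∀ x, x ∈ S ↔ g x - (xs x : EReal) ≤ 0 ∧ g (-x) - (xs (-x) : EReal) ≤ 0 :=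
    fun x => by rw [← SetLike.mem_coe, hS, mem_LxSet_iff hxs]
  obtain ⟨gh, hgh⟩ := S.exists_comp_mkQ_eq (f := fun x => g x - (xs x : EReal)) fun x l hl =>
    hh.apply_add_eq_of_nonpos ((hmemS l).1 hl).1 ((hmemS l).1 hl).2 x
  have hmk : ∀ x, gh (Submodule.Quotient.mk x) = g x - (xs x : EReal) := congrFun hgh
  have hgh_nonneg : ∀ xh, 0 ≤ gh xh :=
    S.mkQ_surjective.forall.2 fun x => (hmk x).symm ▸ hnonneg x
  have hgh_sub : SublinearFn gh := .of_comp S.mkQ_surjective (hgh.symm ▸ hh)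
  refine ⟨gh, hmk, fun xh => ne_bot_of_le_ne_bot EReal.zero_ne_bot (hgh_nonneg xh),
    ⟨0, by rw [hgh_sub.1]; exact EReal.zero_ne_top⟩,
    (hgh.symm ▸ hlsc').of_comp_isQuotientMap S.isQuotientMap_mkQL, hgh_sub, hgh_nonneg, ?_, ?_⟩
  · ext xh
    obtain ⟨x, rfl⟩ := S.mkQ_surjective xh
    simp only [Set.mem_ofPred_eq, Set.mem_singleton_iff, Submodule.mkQ_apply,
      ← Submodule.Quotient.mk_neg, hmk, Submodule.Quotient.mk_eq_zero, hmemS]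
    exact and_congr (hnonneg x).ge_iff_eq'.symm (hnonneg (-x)).ge_iff_eq'.symm
  · rw [mem_qri_iff_zero_mem_qri, ← subdiff0_sub]
    exact zero_mem_qri_iff_zero_mem_qi hh hlsc' hnonneg hmemS hgh

theorem stmt9 [AddCommGroup X] [Module ℝ X] [TopologicalSpace X] [IsTopologicalAddGroup X]
    [ContinuousSMul ℝ X] [LocallyConvexSpace ℝ X] [T2Space X]
    (g : X → EReal) (hsub : SublinearFn g) (hproper : ∀ x, g x ≠ ⊥)
    (hlsc : LowerSemicontinuous g) (xs : WeakDual ℝ X) (hxs : xs ∈ subdiff0 g)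
    (S : Submodule ℝ X) (hS : (S : Set X) = LxSet g xs) :
    ∃ gh : (X ⧸ S) → EReal,
      (∀ x : X, gh (Submodule.Quotient.mk x) = g x - ((xs x : ℝ) : EReal)) ∧
      (∀ xh, gh xh ≠ ⊥) ∧ (∃ xh, gh xh ≠ ⊤) ∧
      LowerSemicontinuous gh ∧ SublinearFn gh ∧ (∀ xh, 0 ≤ gh xh) ∧
      {xh : X ⧸ S | gh xh = 0 ∧ gh (-xh) = 0} = {0} ∧
      (xs ∈ qri (subdiff0 g) ↔ (0 : WeakDual ℝ (X ⧸ S)) ∈ qi (subdiff0 gh)) :=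
  stmt9_general g hsub hlsc xs hxs S hS
end
end
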